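/- arXiv:2409.02363 — 3 statements merged into one kernel-verified Lean document; each statement's English description precedes it below -/
import Mathlib

section
/- Let σ : ℝ → ℝ be the elementary universal activation function. Then for every t ∈ [−1, 2], min{max{t,0},1} = (1/2)((t+1) − σ(t+1)) = (3/2)·σ(t/3 + 1/3) − (1/2)·σ(t+1). -/
/-- The elementary universal activation function (EUAF). -/
noncomputable def euaf (x : ℝ) : ℝ :=
  if 0 ≤ x then |x - 2 * (⌊(x + 1) / 2⌋ : ℝ)| else x / (|x| + 1)

lemma euaf_of_mem_01 (x : ℝ) (h0 : 0 ≤ x) (h1 : x ≤ 1) : euaf x = x := by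
  rcases lt_or_eq_of_le h1 with h | h
  · have hf : ⌊(x + 1) / 2⌋ = 0 := by
      exact Int.floor_eq_zero_iff.mpr (Set.mem_Ico.mpr ⟨by linarith, by linarith⟩)
    simp [euaf, h0, hf, abs_of_nonneg h0]
  · have hf : ⌊(x + 1) / 2⌋ = 1 := by
      subst h; norm_num
    simp [euaf, h0, hf]
    rw [abs_of_nonpos (by linarith)]
    linarith

lemma euaf_of_mem_13 (x : ℝ) (h0 : 1 ≤ x) (h1 : x ≤ 3) : euaf x = |x - 2| := by
  rcases lt_or_eq_of_le h1 with h | h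
  · have hf : ⌊(x + 1) / 2⌋ = 1 := by
      rw [Int.floor_eq_iff]
      push_cast
      constructor <;> linarith
    rw [euaf, if_pos (by linarith : (0:ℝ) ≤ x), hf]
    norm_num
  · subst h
    have hf : ⌊((3 : ℝ) + 1) / 2⌋ = 2 := by norm_num
    rw [euaf, if_pos (by norm_num : (0:ℝ) ≤ 3), hf]
    norm_num

/-- for `t ∈ [-1,2]`, the clipping function `min{max{t,0},1}` is expressed
via the EUAF: `min{max{t,0},1} = (1/2)((t+1) - σ(t+1)) = (3/2)σ(t/3 + 1/3) - (1/2)σ(t+1)`. -/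
theorem clip_eq_euaf_combination (t : ℝ) (ht : t ∈ Set.Icc (-1 : ℝ) 2) :
    min (max t 0) 1 = (1 / 2) * ((t + 1) - euaf (t + 1)) ∧
    min (max t 0) 1 = (3 / 2) * euaf (t / 3 + 1 / 3) - (1 / 2) * euaf (t + 1) := by
  obtain ⟨h1, h2⟩ := ht
  have hm : euaf (t / 3 + 1 / 3) = t / 3 + 1 / 3 :=
    euaf_of_mem_01 _ (by linarith) (by linarith)
  rcases le_total t 0 with h | h
  · have he : euaf (t + 1) = t + 1 := euaf_of_mem_01 _ (by linarith) (by linarith)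
    have hmax : max t 0 = 0 := max_eq_right h
    have hmin : min (0 : ℝ) 1 = 0 := by norm_num
    rw [hmax, hmin, he, hm]
    constructor <;> ring
  · have he : euaf (t + 1) = |t - 1| := by
      have := euaf_of_mem_13 (t + 1) (by linarith) (by linarith)
      rw [show t - 1 = t + 1 - 2 by ring]; exact this
    have hmax : max t 0 = t := max_eq_left h
    rw [hmax, he, hm]
    rcases le_total t 1 with h' | h'
    · rw [min_eq_left h', abs_of_nonpos (by linarith)]
      constructor <;> ring
    · rw [min_eq_right h', abs_of_nonneg (by linarith)]
      constructor <;> ring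
end

section
/- Let d ≥ 1, c > 0, and let f : [−1/2, 1/2]^d → ℝ be continuous with f(0) = 0 and with |f(x_1, …, x_d)| ≥ c whenever x_j = 1/2 for some 1 ≤ j ≤ d. Then for every real (d−1) × d matrix W, every vector b ∈ ℝ^{d−1}, and every function F : ℝ^{d−1} → ℝ, there exists x ∈ [−1/2, 1/2]^d with | f(x) − F(W x + b) | ≥ c/2. -/
/-!
Since `d - 1 < d`, the first layer `W` has a nonzero kernel vector; rescaled so that its largest
coordinate is `1/2`, it lies on the face where `|f| ≥ c`, yet the affine layer sends it to the same
point `b` as the origin, where `f = 0`. A single value `F b` cannot be within `c/2` of both.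
-/

open Matrix

theorem Matrix.exists_mulVec_eq_zero_of_card_lt {K m n : Type*} [Field K] [Fintype m] [Fintype n]
    (W : Matrix m n K) (h : Fintype.card m < Fintype.card n) : ∃ v ≠ 0, W *ᵥ v = 0 := by
  have hker := W.mulVecLin.ker_ne_bot_of_finrank_lt <| by
    simpa only [Module.finrank_fintype_fun_eq_card] using h
  obtain ⟨v, hv, hv0⟩ := Submodule.exists_mem_ne_zero_of_ne_bot hker
  exact ⟨v, hv0, hv⟩

theorem exists_smul_mem_Icc_and_apply_eq {ι : Type*} [Finite ι] {v : ι → ℝ} (hv : v ≠ 0)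
    {r : ℝ} (hr : 0 ≤ r) :
    ∃ t : ℝ, t • v ∈ Set.Icc (fun _ => -r) (fun _ => r) ∧ ∃ j, (t • v) j = r := by
  obtain ⟨i₀, hi₀⟩ := Function.ne_iff.mp hv
  have : Nonempty ι := ⟨i₀⟩
  obtain ⟨j, hj⟩ := Finite.exists_max fun i => |v i|
  have hvj : v j ≠ 0 := abs_pos.mp ((abs_pos.mpr hi₀).trans_le (hj i₀))
  have hbound : ∀ i, |r / v j * v i| ≤ r := fun i => by
    rw [abs_mul, abs_div, abs_of_nonneg hr, div_mul_eq_mul_div, div_le_iff₀ (abs_pos.mpr hvj)]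
    exact mul_le_mul_of_nonneg_left (hj i) hr
  refine ⟨r / v j, ⟨fun i => (abs_le.mp (hbound i)).1, fun i => (abs_le.mp (hbound i)).2⟩, j, ?_⟩
  simp [hvj]

theorem exists_half_le_abs_sub_of_apply_eq {α : Type*} {f g : α → ℝ} {x y : α} {c : ℝ}
    (hg : g x = g y) (hc : c ≤ |f x - f y|) : c / 2 ≤ |f x - g x| ∨ c / 2 ≤ |f y - g y| := by
  by_contra! h
  rw [← hg] at h
  linarith [abs_sub_le (f x) (g x) (f y), abs_sub_comm (g x) (f y)]

theorem width_lower_bound_affine_general (d : ℕ) (hd : 1 ≤ d) (c : ℝ)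
    (f : (Fin d → ℝ) → ℝ)
    (hf0 : f 0 = 0)
    (hfc : ∀ x ∈ Set.Icc (fun _ => -(1 / 2) : Fin d → ℝ) (fun _ => 1 / 2),
      (∃ j, x j = 1 / 2) → c ≤ |f x|) :
    ∀ (W : Matrix (Fin (d - 1)) (Fin d) ℝ) (b : Fin (d - 1) → ℝ)
      (F : (Fin (d - 1) → ℝ) → ℝ),
      ∃ x ∈ Set.Icc (fun _ => -(1 / 2) : Fin d → ℝ) (fun _ => 1 / 2),
        c / 2 ≤ |f x - F (W.mulVec x + b)| := by
  intro W b F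
  obtain ⟨v, hv0, hWv⟩ := W.exists_mulVec_eq_zero_of_card_lt <| by
    simp only [Fintype.card_fin]; omega
  obtain ⟨t, hx, j, hxj⟩ := exists_smul_mem_Icc_and_apply_eq hv0 (r := 1 / 2) (by norm_num)
  set g := fun x => F (W *ᵥ x + b)
  have hsame : g (t • v) = g 0 := by
    simp only [g, mulVec_smul, hWv, smul_zero, mulVec_zero]
  have hfx : c ≤ |f (t • v) - f 0| := by simpa only [hf0, sub_zero] using hfc _ hx ⟨j, hxj⟩
  rcases exists_half_le_abs_sub_of_apply_eq hsame hfx with h | h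
  · exact ⟨t • v, hx, h⟩
  · exact ⟨0, ⟨fun _ => by norm_num, fun _ => by norm_num⟩, h⟩

/-- key step of the width lower bound: any function factoring through a
single affine layer into `ℝ^{d-1}` makes an error of at least `c/2` when approximating
a continuous function vanishing at the origin and bounded below by `c` whenever some
coordinate equals `1/2`. -/
theorem width_lower_bound_affine (d : ℕ) (hd : 1 ≤ d) (c : ℝ) (hc : 0 < c)
    (f : (Fin d → ℝ) → ℝ)
    (hfcont : ContinuousOn f
      (Set.Icc (fun _ => -(1 / 2) : Fin d → ℝ) (fun _ => 1 / 2)))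
    (hf0 : f 0 = 0)
    (hfc : ∀ x ∈ Set.Icc (fun _ => -(1 / 2) : Fin d → ℝ) (fun _ => 1 / 2),
      (∃ j, x j = 1 / 2) → c ≤ |f x|) :
    ∀ (W : Matrix (Fin (d - 1)) (Fin d) ℝ) (b : Fin (d - 1) → ℝ)
      (F : (Fin (d - 1) → ℝ) → ℝ),
      ∃ x ∈ Set.Icc (fun _ => -(1 / 2) : Fin d → ℝ) (fun _ => 1 / 2),
        c / 2 ≤ |f x - F (W.mulVec x + b)| :=
  width_lower_bound_affine_general d hd c f hf0 hfc
end

section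
/- Let d ≥ 1, c > 0, and let f : [−1/2, 1/2]^d → ℝ be continuous with f(0) = 0 and with |f(x_1, …, x_d)| ≥ c whenever x_j = 1/2 for some 1 ≤ j ≤ d. Then for every activation function σ : ℝ → ℝ, every depth L ≥ 1, and every function φ : ℝ^d → ℝ of the form φ = 𝓛_L ∘ σ ∘ 𝓛_{L−1} ∘ σ ∘ ⋯ ∘ σ ∘ 𝓛_1 ∘ σ ∘ 𝓛_0, where each 𝓛_i(y) = W_i y + b_i is affine and every hidden layer has dimension d−1 (i.e., the network has width d−1), there exists x ∈ [−1/2, 1/2]^d with |f(x) − φ(x)| ≥ c/2. In particular, σ networks with width d−1 and fixed depth L cannot approximate f with arbitrary accuracy. -/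
/-- Iterated hidden layers: `hiddenLayers σ N W b i` applies `i` layers of the form
`y ↦ σ (W_k y + b_k)` (componentwise `σ`). -/
def hiddenLayers (σ : ℝ → ℝ) (N : ℕ) (W : ℕ → Matrix (Fin N) (Fin N) ℝ)
    (b : ℕ → Fin N → ℝ) : ℕ → (Fin N → ℝ) → (Fin N → ℝ)
  | 0 => id
  | i + 1 => fun y k => σ ((W i).mulVec (hiddenLayers σ N W b i y) k + b i k)

/-- The function computed by a `σ` network with input dimension `d`, width `N` and
depth `L`: `φ = 𝓛_L ∘ σ ∘ 𝓛_{L-1} ∘ σ ∘ ⋯ ∘ σ ∘ 𝓛_1 ∘ σ ∘ 𝓛_0`. -/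
def netFun (σ : ℝ → ℝ) (d N L : ℕ) (W0 : Matrix (Fin N) (Fin d) ℝ) (b0 : Fin N → ℝ)
    (W : ℕ → Matrix (Fin N) (Fin N) ℝ) (b : ℕ → Fin N → ℝ)
    (wL : Fin N → ℝ) (bL : ℝ) : (Fin d → ℝ) → ℝ :=
  fun x =>
    (∑ k, wL k * hiddenLayers σ N W b (L - 1) (fun k => σ (W0.mulVec x k + b0 k)) k) + bL

/-- `φ` is generated by a `σ` network with input dimension `d`, width `N`, depth `L`. -/
def IsSigmaNetwork (σ : ℝ → ℝ) (d N L : ℕ) (φ : (Fin d → ℝ) → ℝ) : Prop :=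
  ∃ W0 b0 W b wL bL, φ = netFun σ d N L W0 b0 W b wL bL

/-- `φ : ℝ → ℝ` is generated by an EUAF network (input dimension 1) with width `N`
and depth `L`. -/
def IsEUAFNetwork1 (N L : ℕ) (φ : ℝ → ℝ) : Prop :=
  ∃ ψ : (Fin 1 → ℝ) → ℝ, IsSigmaNetwork euaf 1 N L ψ ∧ ∀ x, φ x = ψ (fun _ => x)

open Matrix

theorem Matrix.exists_ne_zero_mulVec_eq_zero_of_card_lt {K m n : Type*} [Field K] [Fintype m]
    [Fintype n] (M : Matrix m n K) (h : Fintype.card m < Fintype.card n) :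
    ∃ v ≠ 0, M *ᵥ v = 0 := by
  have hker : LinearMap.ker M.mulVecLin ≠ ⊥ :=
    LinearMap.ker_ne_bot_of_finrank_lt (by simpa only [Module.finrank_fintype_fun_eq_card])
  obtain ⟨v, hv, hv0⟩ := (Submodule.ne_bot_iff _).mp hker
  exact ⟨v, hv0, by simpa only [LinearMap.mem_ker, Matrix.mulVecLin_apply] using hv⟩

theorem netFun_eq_of_mulVec_eq (σ : ℝ → ℝ) {d N : ℕ} (L : ℕ) {W0 : Matrix (Fin N) (Fin d) ℝ}
    (b0 : Fin N → ℝ) (W : ℕ → Matrix (Fin N) (Fin N) ℝ) (b : ℕ → Fin N → ℝ) (wL : Fin N → ℝ)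
    (bL : ℝ) {x y : Fin d → ℝ} (h : W0 *ᵥ x = W0 *ᵥ y) :
    netFun σ d N L W0 b0 W b wL bL x = netFun σ d N L W0 b0 W b wL bL y := by
  simp only [netFun, h]

theorem exists_smul_mem_cube_coord_eq_half {ι : Type*} [Finite ι] {v : ι → ℝ} (hv : v ≠ 0) :
    ∃ t : ℝ, t • v ∈ Set.Icc (fun _ => -(1 / 2) : ι → ℝ) (fun _ => 1 / 2) ∧
      ∃ j, (t • v) j = 1 / 2 := by
  obtain ⟨i, hi⟩ := Function.ne_iff.mp hv
  have : Nonempty ι := ⟨i⟩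
  obtain ⟨j, hj⟩ := Finite.exists_max fun k => |v k|
  have hvj : v j ≠ 0 := abs_pos.mp ((abs_pos.mpr hi).trans_le (hj i))
  have hbound : ∀ k, |((2 * v j)⁻¹ • v) k| ≤ 1 / 2 := fun k => by
    rw [Pi.smul_apply, smul_eq_mul, abs_mul, abs_inv, abs_mul, abs_two,
      inv_mul_le_iff₀ (by positivity)]
    linarith [hj k]
  refine ⟨_, ⟨fun k => (abs_le.mp (hbound k)).1, fun k => (abs_le.mp (hbound k)).2⟩, j, ?_⟩
  rw [Pi.smul_apply, smul_eq_mul]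
  field_simp

theorem half_le_abs_sub_or_half_le_abs_sub {a b c : ℝ} (p : ℝ) (h : c ≤ |a - b|) :
    c / 2 ≤ |a - p| ∨ c / 2 ≤ |b - p| := by
  by_contra! hlt
  linarith [abs_sub_le a p b, abs_sub_comm b p]

theorem width_lower_bound_general (d : ℕ) (hd : 1 ≤ d) (c : ℝ)
    (f : (Fin d → ℝ) → ℝ)
    (hf0 : f 0 = 0)
    (hfc : ∀ x ∈ Set.Icc (fun _ => -(1 / 2) : Fin d → ℝ) (fun _ => 1 / 2),
      (∃ j, x j = 1 / 2) → c ≤ |f x|) :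
    ∀ (σ : ℝ → ℝ) (L : ℕ), 1 ≤ L →
      ∀ φ : (Fin d → ℝ) → ℝ, IsSigmaNetwork σ d (d - 1) L φ →
        ∃ x ∈ Set.Icc (fun _ => -(1 / 2) : Fin d → ℝ) (fun _ => 1 / 2),
          c / 2 ≤ |f x - φ x| := by
  rintro σ L - φ ⟨W0, b0, W, b, wL, bL, rfl⟩
  obtain ⟨v, hv, hW0v⟩ := W0.exists_ne_zero_mulVec_eq_zero_of_card_lt
    (by simp only [Fintype.card_fin]; omega)
  obtain ⟨t, hmem, j, hj⟩ := exists_smul_mem_cube_coord_eq_half hv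
  have hnet : netFun σ d (d - 1) L W0 b0 W b wL bL (t • v)
      = netFun σ d (d - 1) L W0 b0 W b wL bL 0 :=
    netFun_eq_of_mulVec_eq σ L b0 W b wL bL (by rw [mulVec_smul, hW0v, smul_zero, mulVec_zero])
  have hgap : c ≤ |f (t • v) - f 0| := by
    rw [hf0, sub_zero]
    exact hfc _ hmem ⟨j, hj⟩
  rcases half_le_abs_sub_or_half_le_abs_sub (netFun σ d (d - 1) L W0 b0 W b wL bL 0) hgap
    with h | h
  · exact ⟨t • v, hmem, hnet ▸ h⟩
  · exact ⟨0, ⟨fun _ => by norm_num, fun _ => by norm_num⟩, h⟩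

/-- width lower bound: for any activation `σ` and any depth `L ≥ 1`, a
`σ` network of width `d-1` makes an error of at least `c/2` somewhere on the cube when
approximating a continuous function vanishing at the origin and bounded below by `c`
whenever some coordinate equals `1/2`; hence such networks cannot approximate `f` with
arbitrary accuracy. -/
theorem width_lower_bound (d : ℕ) (hd : 1 ≤ d) (c : ℝ) (hc : 0 < c)
    (f : (Fin d → ℝ) → ℝ)
    (hfcont : ContinuousOn f
      (Set.Icc (fun _ => -(1 / 2) : Fin d → ℝ) (fun _ => 1 / 2)))
    (hf0 : f 0 = 0)
    (hfc : ∀ x ∈ Set.Icc (fun _ => -(1 / 2) : Fin d → ℝ) (fun _ => 1 / 2),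
      (∃ j, x j = 1 / 2) → c ≤ |f x|) :
    ∀ (σ : ℝ → ℝ) (L : ℕ), 1 ≤ L →
      ∀ φ : (Fin d → ℝ) → ℝ, IsSigmaNetwork σ d (d - 1) L φ →
        ∃ x ∈ Set.Icc (fun _ => -(1 / 2) : Fin d → ℝ) (fun _ => 1 / 2),
          c / 2 ≤ |f x - φ x| :=
  width_lower_bound_general d hd c f hf0 hfc
end
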